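/- Let Γ be the set of subprobability measures μ on Δ = {(x,y)∈[0,1]²: y≥x} with subuniform marginals. Then for every μ ∈ Γ, I₁(μ) := ∫_Δ (y−x) dμ ≤ 1/4, with equality if and only if μ is a subprobability on [0,1/2]×[1/2,1] with uniform marginals (i.e., μ ∈ Γ̃). -/

import Mathlib

/-!
Pointwise `y - x ≤ (1/2 - x)⁺ + (y - 1/2)⁺`, with equality exactly when `x ≤ 1/2 ≤ y`. Support in
the triangle and subuniform marginals say that both marginals of `μ` are dominated by Lebesgue
measure `λ` on `[0,1]`, so each term on the right integrates to at most
`∫₀¹ (1/2 - x)⁺ dx = 1/8`, giving `I₁(μ) ≤ 1/4`. The gap in such a bound is the integral of a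
nonnegative function against the measure `λ - marginal`, so it closes exactly when that measure
does not charge where the function is positive: the marginals are then uniform on `[0,1/2]` and on
`[1/2,1]`, and equality in the pointwise bound puts `μ` on `[0,1/2] × [1/2,1]`.
-/

open MeasureTheory Set Filter

/-- The triangle `Δ = {(x,y) ∈ [0,1]² : y ≥ x}`. -/
def Tri : Set (ℝ × ℝ) := {p : ℝ × ℝ | 0 ≤ p.1 ∧ p.1 ≤ p.2 ∧ p.2 ≤ 1}

namespace MeasureTheory

section Comparison

variable {α : Type*} [MeasurableSpace α] {μ ν : Measure α} [IsFiniteMeasure μ]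

theorem Measure.sub_apply_eq_zero_iff_of_le (hle : ν ≤ μ) (s : Set α) :
    (μ - ν) s = 0 ↔ ν s = μ s := by
  have : IsFiniteMeasure ν := isFiniteMeasure_of_le μ hle
  conv_rhs => rw [← Measure.sub_add_cancel_of_le hle, Measure.add_apply]
  rw [← ENNReal.add_left_inj (measure_ne_top ν s), zero_add, eq_comm]

theorem Measure.measure_eq_of_subset_of_le (hle : ν ≤ μ) {s t : Set α} (hts : t ⊆ s)
    (hs : ν s = μ s) : ν t = μ t := by
  rw [← Measure.sub_apply_eq_zero_iff_of_le hle] at hs ⊢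
  exact measure_mono_null hts hs

theorem integral_eq_integral_iff_of_le (hle : ν ≤ μ) {f : α → ℝ} (hf : Integrable f μ)
    (hf0 : 0 ≤ᵐ[μ] f) {s : Set α} (hs : ∀ᵐ x ∂μ, x ∈ s ↔ 0 < f x) :
    ∫ x, f x ∂ν = ∫ x, f x ∂μ ↔ ν s = μ s := by
  have : IsFiniteMeasure ν := isFiniteMeasure_of_le μ hle
  have hac : μ - ν ≪ μ := Measure.absolutelyContinuous_of_le Measure.sub_le
  have hsplit : ∫ x, f x ∂μ = ∫ x, f x ∂(μ - ν) + ∫ x, f x ∂ν := by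
    conv_lhs => rw [← Measure.sub_add_cancel_of_le hle]
    exact integral_add_measure (hf.mono_measure Measure.sub_le) (hf.mono_measure hle)
  rw [← Measure.sub_apply_eq_zero_iff_of_le hle, hsplit, right_eq_add,
    integral_eq_zero_iff_of_nonneg_ae (hac.ae_le hf0) (hf.mono_measure Measure.sub_le),
    measure_eq_zero_iff_ae_notMem]
  refine eventually_congr ?_
  filter_upwards [hac.ae_le hs, hac.ae_le hf0] with x hxs (hx0 : 0 ≤ f x)
  rw [hxs, not_lt]
  exact hx0.ge_iff_eq'.symm

end Comparison

end MeasureTheory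

section RealLine

theorem le_volume_of_forall_Ioc_le {ν : Measure ℝ}
    (h : ∀ a b, a ≤ b → ν (Ioc a b) ≤ .ofReal (b - a)) : ν ≤ volume := by
  intro s
  -- Lebesgue measure is the outer measure generated by the lengths of the intervals `Ioc a b`.
  rw [Real.volume_eq_stieltjes_id, StieltjesFunction.measure]
  refine (OuterMeasure.le_ofFunction (m_empty := StieltjesFunction.id.length_empty)).2
    (fun t => ?_) s
  rw [StieltjesFunction.length_eq]
  refine le_iInf₂ fun a b => le_iInf fun hab => ?_
  have hνt : ν t ≤ ν (Ioc a b) := measure_mono fun x hx => hab ⟨hx, not_isBot x⟩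
  rcases le_or_gt a b with hab' | hba
  · exact hνt.trans (h a b hab')
  · rw [Ioc_eq_empty_of_le hba.le, measure_empty] at hνt
    exact hνt.trans zero_le

theorem le_volume_restrict_of_forall_Icc_le {ν : Measure ℝ} {s : Set ℝ}
    (h : ∀ a b, a ≤ b → ν (Icc a b) ≤ .ofReal (b - a)) (hs : ν sᶜ = 0) :
    ν ≤ volume.restrict s :=
  calc ν = ν.restrict s := (Measure.restrict_eq_self_of_ae_mem hs).symm
    _ ≤ volume.restrict s := Measure.restrict_mono subset_rfl <|
      le_volume_of_forall_Ioc_le fun a b hab =>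
        (measure_mono Ioc_subset_Icc_self).trans (h a b hab)

theorem setIntegral_Icc_zero_one_max_const_sub {c : ℝ} (hc : c ∈ Icc (0 : ℝ) 1) :
    ∫ x in Icc (0 : ℝ) 1, max (c - x) 0 = c ^ 2 / 2 := by
  have hcont : Continuous fun x : ℝ => max (c - x) 0 := by fun_prop
  rw [integral_Icc_eq_integral_Ioc, ← intervalIntegral.integral_of_le zero_le_one,
    ← intervalIntegral.integral_add_adjacent_intervals (b := c)
      (hcont.intervalIntegrable _ _) (hcont.intervalIntegrable _ _),
    intervalIntegral.integral_congr (g := fun x => c - x) fun x hx => ?left,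
    intervalIntegral.integral_congr (a := c) (g := fun _ => 0) fun x hx => ?right]
  · rw [intervalIntegral.integral_zero, add_zero, intervalIntegral.integral_sub
      intervalIntegrable_const intervalIntegral.intervalIntegrable_id, integral_id,
      intervalIntegral.integral_const, smul_eq_mul]
    ring
  case left =>
    rw [uIcc_of_le hc.1] at hx
    exact max_eq_left (by linarith [hx.2])
  case right =>
    rw [uIcc_of_le hc.2] at hx
    exact max_eq_right (by linarith [hx.1])

theorem setIntegral_Icc_zero_one_max_sub_const {c : ℝ} (hc : c ∈ Icc (0 : ℝ) 1) :
    ∫ x in Icc (0 : ℝ) 1, max (x - c) 0 = (1 - c) ^ 2 / 2 := by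
  have hflip := intervalIntegral.integral_comp_sub_left (fun y => max ((1 - c) - y) 0)
    (a := 0) (b := 1) 1
  simp only [sub_sub_sub_cancel_left, sub_zero, sub_self] at hflip
  rw [integral_Icc_eq_integral_Ioc, ← intervalIntegral.integral_of_le zero_le_one, hflip,
    intervalIntegral.integral_of_le zero_le_one, ← integral_Icc_eq_integral_Ioc,
    setIntegral_Icc_zero_one_max_const_sub]
  exact ⟨by linarith [hc.2], by linarith [hc.1]⟩

variable {ν : Measure ℝ}

theorem integral_max_const_sub_le (hν : ν ≤ volume.restrict (Icc 0 1)) {c : ℝ}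
    (hc : c ∈ Icc (0 : ℝ) 1) : ∫ x, max (c - x) 0 ∂ν ≤ c ^ 2 / 2 :=
  (integral_mono_measure hν (ae_of_all _ fun _ => le_max_right _ _)
    (Continuous.integrableOn_Icc (by fun_prop))).trans_eq
    (setIntegral_Icc_zero_one_max_const_sub hc)

theorem integral_max_sub_const_le (hν : ν ≤ volume.restrict (Icc 0 1)) {c : ℝ}
    (hc : c ∈ Icc (0 : ℝ) 1) : ∫ x, max (x - c) 0 ∂ν ≤ (1 - c) ^ 2 / 2 :=
  (integral_mono_measure hν (ae_of_all _ fun _ => le_max_right _ _)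
    (Continuous.integrableOn_Icc (by fun_prop))).trans_eq
    (setIntegral_Icc_zero_one_max_sub_const hc)

theorem integral_max_const_sub_eq_iff (hν : ν ≤ volume.restrict (Icc 0 1)) {c : ℝ}
    (hc : c ∈ Icc (0 : ℝ) 1) :
    ∫ x, max (c - x) 0 ∂ν = c ^ 2 / 2 ↔ ν (Icc 0 c) = volume (Icc 0 c) := by
  have hs : ∀ᵐ x ∂volume.restrict (Icc (0 : ℝ) 1), x ∈ Icc 0 c ↔ 0 < max (c - x) 0 := by
    filter_upwards [ae_restrict_mem measurableSet_Icc,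
      ae_restrict_of_ae (measure_eq_zero_iff_ae_notMem.1 (measure_singleton c))] with x hx hxc
    rw [mem_singleton_iff] at hxc
    simp only [mem_Icc, lt_max_iff, lt_irrefl, or_false, sub_pos, hx.1, true_and]
    exact ⟨fun h => lt_of_le_of_ne h hxc, le_of_lt⟩
  rw [← setIntegral_Icc_zero_one_max_const_sub hc,
    integral_eq_integral_iff_of_le (f := fun x => max (c - x) 0) hν
      (Continuous.integrableOn_Icc (by fun_prop)) (ae_of_all _ fun _ => le_max_right _ _) hs,
    Measure.restrict_eq_self _ (Icc_subset_Icc_right hc.2)]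

theorem integral_max_sub_const_eq_iff (hν : ν ≤ volume.restrict (Icc 0 1)) {c : ℝ}
    (hc : c ∈ Icc (0 : ℝ) 1) :
    ∫ x, max (x - c) 0 ∂ν = (1 - c) ^ 2 / 2 ↔ ν (Icc c 1) = volume (Icc c 1) := by
  have hs : ∀ᵐ x ∂volume.restrict (Icc (0 : ℝ) 1), x ∈ Icc c 1 ↔ 0 < max (x - c) 0 := by
    filter_upwards [ae_restrict_mem measurableSet_Icc,
      ae_restrict_of_ae (measure_eq_zero_iff_ae_notMem.1 (measure_singleton c))] with x hx hxc
    rw [mem_singleton_iff] at hxc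
    simp only [mem_Icc, lt_max_iff, lt_irrefl, or_false, sub_pos, hx.2, and_true]
    exact ⟨fun h => lt_of_le_of_ne h (Ne.symm hxc), le_of_lt⟩
  rw [← setIntegral_Icc_zero_one_max_sub_const hc,
    integral_eq_integral_iff_of_le (f := fun x => max (x - c) 0) hν
      (Continuous.integrableOn_Icc (by fun_prop)) (ae_of_all _ fun _ => le_max_right _ _) hs,
    Measure.restrict_eq_self _ (Icc_subset_Icc_left hc.1)]

theorem measure_Icc_eq_volume_iff_forall (hν : ν ≤ volume.restrict (Icc 0 1)) {c d : ℝ}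
    (hc : 0 ≤ c) (hcd : c ≤ d) (hd : d ≤ 1) :
    ν (Icc c d) = volume (Icc c d) ↔
      ∀ a b, c ≤ a → a ≤ b → b ≤ d → ν (Icc a b) = .ofReal (b - a) := by
  have hrestr {a b : ℝ} (ha : c ≤ a) (hb : b ≤ d) :
      volume.restrict (Icc 0 1) (Icc a b) = volume (Icc a b) :=
    Measure.restrict_eq_self _ (Icc_subset_Icc (hc.trans ha) (hb.trans hd))
  refine ⟨fun h a b ha hab hb => ?_, fun h => by rw [h c d le_rfl hcd le_rfl, Real.volume_Icc]⟩
  rw [← Real.volume_Icc, ← hrestr ha hb]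
  exact Measure.measure_eq_of_subset_of_le hν (Icc_subset_Icc ha hb)
    (by rw [h, hrestr le_rfl le_rfl])

end RealLine

theorem sub_le_max_sub_add_max_sub (x y c : ℝ) : y - x ≤ max (c - x) 0 + max (y - c) 0 := by
  linarith [le_max_left (c - x) 0, le_max_left (y - c) 0]

theorem sub_eq_max_sub_add_max_sub_iff (x y c : ℝ) :
    y - x = max (c - x) 0 + max (y - c) 0 ↔ x ≤ c ∧ c ≤ y := by
  refine ⟨fun h => ?_, fun ⟨hx, hy⟩ => ?_⟩
  · constructor <;> linarith [le_max_left (c - x) 0, le_max_left (y - c) 0,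
      le_max_right (c - x) 0, le_max_right (y - c) 0]
  · rw [max_eq_left (sub_nonneg.2 hx), max_eq_left (sub_nonneg.2 hy)]
    ring

theorem Tri_subset_Icc_prod_Icc : Tri ⊆ Icc (0 : ℝ) 1 ×ˢ Icc (0 : ℝ) 1 := by
  intro p hp
  obtain ⟨h0, hxy, h1⟩ : 0 ≤ p.1 ∧ p.1 ≤ p.2 ∧ p.2 ≤ 1 := hp
  exact ⟨⟨h0, hxy.trans h1⟩, ⟨h0.trans hxy, h1⟩⟩

section Marginals

variable {μ : Measure (ℝ × ℝ)}

theorem MeasureTheory.Measure.fst_Icc (a b : ℝ) :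
    μ.fst (Icc a b) = μ {p | a ≤ p.1 ∧ p.1 ≤ b} :=
  Measure.fst_apply measurableSet_Icc

theorem MeasureTheory.Measure.snd_Icc (a b : ℝ) :
    μ.snd (Icc a b) = μ {p | a ≤ p.2 ∧ p.2 ≤ b} :=
  Measure.snd_apply measurableSet_Icc

theorem fst_le_volume_restrict (hsupp : μ Triᶜ = 0)
    (hx : ∀ a b : ℝ, a ≤ b → μ {p : ℝ × ℝ | a ≤ p.1 ∧ p.1 ≤ b} ≤ ENNReal.ofReal (b - a)) :
    μ.fst ≤ volume.restrict (Icc 0 1) :=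
  le_volume_restrict_of_forall_Icc_le
    (fun a b hab => (Measure.fst_Icc a b).trans_le (hx a b hab)) <| by
      rw [Measure.fst_apply measurableSet_Icc.compl]
      exact measure_mono_null (fun p hp hT => hp (Tri_subset_Icc_prod_Icc hT).1) hsupp

theorem snd_le_volume_restrict (hsupp : μ Triᶜ = 0)
    (hy : ∀ a b : ℝ, a ≤ b → μ {p : ℝ × ℝ | a ≤ p.2 ∧ p.2 ≤ b} ≤ ENNReal.ofReal (b - a)) :
    μ.snd ≤ volume.restrict (Icc 0 1) :=
  le_volume_restrict_of_forall_Icc_le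
    (fun a b hab => (Measure.snd_Icc a b).trans_le (hy a b hab)) <| by
      rw [Measure.snd_apply measurableSet_Icc.compl]
      exact measure_mono_null (fun p hp hT => hp (Tri_subset_Icc_prod_Icc hT).2) hsupp

theorem ae_fst_le_and_le_snd_iff (hsupp : μ Triᶜ = 0) (c : ℝ) :
    (∀ᵐ p ∂μ, p.1 ≤ c ∧ c ≤ p.2) ↔ μ (Icc 0 c ×ˢ Icc c 1)ᶜ = 0 := by
  rw [← mem_ae_iff]
  refine eventually_congr ?_
  filter_upwards [mem_ae_iff.2 hsupp] with p hp
  obtain ⟨h0, -, h1⟩ : 0 ≤ p.1 ∧ p.1 ≤ p.2 ∧ p.2 ≤ 1 := hp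
  change _ ↔ p ∈ Icc 0 c ×ˢ Icc c 1
  simp only [mem_prod, mem_Icc, h0, h1, true_and, and_true]

theorem integrable_comp_fst (hfst : μ.fst ≤ volume.restrict (Icc 0 1)) {f : ℝ → ℝ}
    (hf : Continuous f) : Integrable (fun p => f p.1) μ :=
  (Integrable.mono_measure hf.integrableOn_Icc hfst :
    Integrable f (μ.map Prod.fst)).comp_measurable measurable_fst

theorem integrable_comp_snd (hsnd : μ.snd ≤ volume.restrict (Icc 0 1)) {f : ℝ → ℝ}
    (hf : Continuous f) : Integrable (fun p => f p.2) μ :=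
  (Integrable.mono_measure hf.integrableOn_Icc hsnd :
    Integrable f (μ.map Prod.snd)).comp_measurable measurable_snd

theorem integral_snd_sub_fst_le_and_eq_iff (hfst : μ.fst ≤ volume.restrict (Icc 0 1))
    (hsnd : μ.snd ≤ volume.restrict (Icc 0 1)) (c : ℝ) :
    ∫ p, (p.2 - p.1) ∂μ ≤ ∫ x, max (c - x) 0 ∂μ.fst + ∫ y, max (y - c) 0 ∂μ.snd ∧
      (∫ p, (p.2 - p.1) ∂μ = ∫ x, max (c - x) 0 ∂μ.fst + ∫ y, max (y - c) 0 ∂μ.snd ↔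
        ∀ᵐ p ∂μ, p.1 ≤ c ∧ c ≤ p.2) := by
  have hA := integrable_comp_fst hfst (f := fun x => max (c - x) 0) (by fun_prop)
  have hB := integrable_comp_snd hsnd (f := fun y => max (y - c) 0) (by fun_prop)
  have hint : Integrable (fun p : ℝ × ℝ => p.2 - p.1) μ :=
    (integrable_comp_snd hsnd continuous_id).sub (integrable_comp_fst hfst continuous_id)
  have hsum : ∫ p, (max (c - p.1) 0 + max (p.2 - c) 0) ∂μ
      = ∫ x, max (c - x) 0 ∂μ.fst + ∫ y, max (y - c) 0 ∂μ.snd := by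
    rw [integral_add hA hB, Measure.fst, Measure.snd,
      integral_map measurable_fst.aemeasurable (by fun_prop),
      integral_map measurable_snd.aemeasurable (by fun_prop)]
  have hsumint : Integrable (fun p : ℝ × ℝ => max (c - p.1) 0 + max (p.2 - c) 0) μ :=
    hA.add hB
  have hle (p : ℝ × ℝ) : p.2 - p.1 ≤ max (c - p.1) 0 + max (p.2 - c) 0 :=
    sub_le_max_sub_add_max_sub p.1 p.2 c
  rw [← hsum, integral_eq_iff_of_ae_le hint hsumint (ae_of_all _ hle)]
  exact ⟨integral_mono hint hsumint hle,
    eventually_congr (ae_of_all _ fun p => sub_eq_max_sub_add_max_sub_iff p.1 p.2 c)⟩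

end Marginals

theorem stmt17 (μ : Measure (ℝ × ℝ))
    (hsupp : μ Triᶜ = 0)
    (hx : ∀ a b : ℝ, a ≤ b → μ {p : ℝ × ℝ | a ≤ p.1 ∧ p.1 ≤ b} ≤ ENNReal.ofReal (b - a))
    (hy : ∀ a b : ℝ, a ≤ b → μ {p : ℝ × ℝ | a ≤ p.2 ∧ p.2 ≤ b} ≤ ENNReal.ofReal (b - a)) :
    (∫ p : ℝ × ℝ, (p.2 - p.1) ∂μ) ≤ 1 / 4 ∧
      ((∫ p : ℝ × ℝ, (p.2 - p.1) ∂μ) = 1 / 4 ↔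
        (μ ((Set.Icc (0 : ℝ) (1 / 2) ×ˢ Set.Icc (1 / 2 : ℝ) 1)ᶜ) = 0 ∧
          (∀ a b : ℝ, 0 ≤ a → a ≤ b → b ≤ 1 / 2 →
            μ {p : ℝ × ℝ | a ≤ p.1 ∧ p.1 ≤ b} = ENNReal.ofReal (b - a)) ∧
          (∀ a b : ℝ, 1 / 2 ≤ a → a ≤ b → b ≤ 1 →
            μ {p : ℝ × ℝ | a ≤ p.2 ∧ p.2 ≤ b} = ENNReal.ofReal (b - a)))) := by
  have hfst := fst_le_volume_restrict hsupp hx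
  have hsnd := snd_le_volume_restrict hsupp hy
  have hc : (1 / 2 : ℝ) ∈ Icc 0 1 := by norm_num
  obtain ⟨hI, hIeq⟩ := integral_snd_sub_fst_le_and_eq_iff hfst hsnd (1 / 2)
  have hA := integral_max_const_sub_le hfst hc
  have hB := integral_max_sub_const_le hsnd hc
  refine ⟨by linarith, ?_⟩
  have hsplit : ∫ p, (p.2 - p.1) ∂μ = 1 / 4 ↔
      ∫ p, (p.2 - p.1) ∂μ = ∫ x, max (1 / 2 - x) 0 ∂μ.fst + ∫ y, max (y - 1 / 2) 0 ∂μ.snd ∧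
      ∫ x, max (1 / 2 - x) 0 ∂μ.fst = (1 / 2) ^ 2 / 2 ∧
      ∫ y, max (y - 1 / 2) 0 ∂μ.snd = (1 - 1 / 2) ^ 2 / 2 :=
    ⟨fun h => ⟨by linarith, by linarith, by linarith⟩, fun ⟨h₁, h₂, h₃⟩ => by linarith⟩
  rw [hsplit, hIeq, ae_fst_le_and_le_snd_iff hsupp, integral_max_const_sub_eq_iff hfst hc,
    integral_max_sub_const_eq_iff hsnd hc, measure_Icc_eq_volume_iff_forall hfst le_rfl hc.1 hc.2,
    measure_Icc_eq_volume_iff_forall hsnd hc.1 hc.2 le_rfl]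
  simp only [Measure.fst_Icc, Measure.snd_Icc]
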